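/- arXiv:2202.04463 — 2 statements merged into one kernel-verified Lean document; each statement's English description precedes it below -/
import Mathlib

section
/- In the Coxeter group W of type E₇, the element w₀ · (s₁s₄s₆) is conjugate in W to s₁s₂s₅s₇. -/
open CoxeterMatrix

/-!
Let `ρ` be the geometric representation of a simply-laced Coxeter group on `ℤ^B`, the basis
vectors `eᵢ` playing the role of the simple roots. By induction on length, `ρ w eᵢ ≥ 0` whenever
`ℓ (w sᵢ) > ℓ w`, and hence `ρ w eᵢ` is nonpositive and nonzero when `i` is a right descent of
`w`. Two consequences: `ρ` is faithful, since an element `w ≠ 1` has a right descent; and an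
element `w₀` having every `i` as a right descent acts as `-1` as soon as some `c` does, because
then `w₀ c` has no right descent. For `E₇` one may take `c` to be the ninth power of a Coxeter
element. The conjugacy then becomes an identity between `7 × 7` integer matrices,
`ρ g · (-ρ(s₁s₄s₆)) = ρ(s₁s₂s₅s₇) · ρ g`, for an explicit `g`, which is checked by computation.
-/

lemma LinearMap.pi_ext_one {R M ι : Type*} [Semiring R] [AddCommMonoid M] [Module R M] [Finite ι]
    [DecidableEq ι] {f g : (ι → R) →ₗ[R] M} (h : ∀ i, f (Pi.single i 1) = g (Pi.single i 1)) :
    f = g :=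
  (Pi.basisFun R ι).ext fun i => by simpa using h i

namespace CoxeterMatrix

variable {B : Type*} (M : CoxeterMatrix B)

def IsSimplyLaced : Prop := ∀ i j, i ≠ j → M i j = 2 ∨ M i j = 3

variable [Fintype B] [DecidableEq B]

def simplyLacedCartan : Matrix B B ℤ :=
  Matrix.of fun i j => if i = j then 2 else if M i j = 3 then -1 else 0

def corootForm (i : B) : Module.Dual ℤ (B → ℤ) :=
  LinearMap.proj i ∘ₗ M.simplyLacedCartan.mulVecLin

def simpleReflection (i : B) : Module.End ℤ (B → ℤ) :=
  Module.preReflection (Pi.single i 1) (M.corootForm i)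

variable {M}

lemma corootForm_single (i j : B) :
    M.corootForm i (Pi.single j 1) = if i = j then 2 else if M i j = 3 then -1 else 0 := by
  simp [corootForm, simplyLacedCartan]

lemma corootForm_single_self (i : B) : M.corootForm i (Pi.single i 1) = 2 := by
  simp [corootForm_single]

lemma corootForm_single_of_eq_two {i j : B} (h : M i j = 2) :
    M.corootForm i (Pi.single j 1) = 0 := by
  have hij : i ≠ j := by rintro rfl; simp at h
  simp [corootForm_single, hij, h]

lemma corootForm_single_of_eq_three {i j : B} (h : M i j = 3) :
    M.corootForm i (Pi.single j 1) = -1 := by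
  have hij : i ≠ j := by rintro rfl; simp at h
  simp [corootForm_single, hij, h]

lemma simpleReflection_apply (i : B) (v : B → ℤ) :
    M.simpleReflection i v = v - M.corootForm i v • Pi.single i 1 :=
  Module.preReflection_apply _ _ _

lemma simpleReflection_single_self (i : B) :
    M.simpleReflection i (Pi.single i 1) = -Pi.single i 1 :=
  Module.preReflection_apply_self (corootForm_single_self i)

lemma simpleReflection_single_of_eq_two {i j : B} (h : M i j = 2) :
    M.simpleReflection j (Pi.single i 1) = Pi.single i 1 := by
  rw [M.symmetric] at h
  simp [simpleReflection_apply, corootForm_single_of_eq_two h]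

lemma simpleReflection_single_of_eq_three {i j : B} (h : M i j = 3) :
    M.simpleReflection j (Pi.single i 1) = Pi.single i 1 + Pi.single j 1 := by
  rw [M.symmetric] at h
  simp [simpleReflection_apply, corootForm_single_of_eq_three h]

theorem isLiftable_simpleReflection (hM : M.IsSimplyLaced) :
    M.IsLiftable M.simpleReflection := by
  intro i j
  refine LinearMap.ext fun v => ?_
  by_cases hij : i = j
  · subst hij
    simpa [M.diagonal, simpleReflection] using
      Module.involutive_preReflection (corootForm_single_self i) v
  rcases hM i j hij with h | h
  all_goals
    have h' := M.symmetric i j ▸ h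
    simp only [h, h', pow_succ, pow_zero, one_mul, Module.End.mul_apply, Module.End.one_apply,
      simpleReflection_apply, map_sub, map_smul, corootForm_single_self,
      corootForm_single_of_eq_two, corootForm_single_of_eq_three]
    module

end CoxeterMatrix

namespace CoxeterSystem

variable {B : Type*} {M : CoxeterMatrix B} {W : Type*} [Group W] (cs : CoxeterSystem M W)

local prefix:100 "s" => cs.simple
local prefix:100 "ℓ" => cs.length

lemma simple_mul_simple_comm_of_eq_two {i j : B} (h : M i j = 2) : s i * s j = s j * s i := by
  have := cs.simple_mul_simple_pow i j
  rw [h, pow_two, ← eq_inv_iff_mul_eq_one] at this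
  simpa [mul_inv_rev] using this

lemma simple_mul_simple_mul_simple_of_eq_three {i j : B} (h : M i j = 3) :
    s i * s j * s i = s j * s i * s j := by
  have := cs.wordProd_braidWord_eq i j
  rw [braidWord, braidWord, M.symmetric j i, h] at this
  simpa [alternatingWord, wordProd, mul_assoc] using this.symm

lemma length_mul_simple_le (w : W) (i : B) : ℓ (w * s i) ≤ ℓ w + 1 := by
  simpa using cs.length_mul_le w (s i)

lemma isRightDescent_of_forall_length_le {w : W} (hw : ∀ v, ℓ v ≤ ℓ w) (i : B) :
    cs.IsRightDescent w i :=
  lt_of_le_of_ne (hw _) (cs.length_mul_simple_ne w i)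

variable [Fintype B] [DecidableEq B] (hM : M.IsSimplyLaced)

def geometricRepresentation : W →* Module.End ℤ (B → ℤ) :=
  cs.lift ⟨M.simpleReflection, M.isLiftable_simpleReflection hM⟩

local notation "ρ" => cs.geometricRepresentation hM

lemma geometricRepresentation_simple (i : B) : ρ (s i) = M.simpleReflection i :=
  cs.lift_apply_simple _ i

lemma geometricRepresentation_wordProd (ω : List B) :
    ρ (cs.wordProd ω) = (ω.map M.simpleReflection).prod := by
  simp [wordProd, map_list_prod, List.map_map, Function.comp_def, geometricRepresentation_simple]

lemma geometricRepresentation_mul_simple_apply (w : W) (i : B) (v : B → ℤ) :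
    ρ (w * s i) v = ρ w (M.simpleReflection i v) := by
  rw [map_mul, geometricRepresentation_simple, Module.End.mul_apply]

lemma nonneg_geometricRepresentation_apply_add_of_eq_three {v : W} {i j : B} (hij : M i j = 3)
    (ih : ∀ u : W, ℓ u ≤ ℓ v → ∀ k, ¬cs.IsRightDescent u k → 0 ≤ ρ u (Pi.single k 1))
    (hj : ¬cs.IsRightDescent v j) (hji : ℓ (v * s j * s i) = ℓ v + 2) :
    0 ≤ ρ v (Pi.single i 1 + Pi.single j 1) := by
  by_cases hi : cs.IsRightDescent v i
  · set u := v * s i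
    have hu : ℓ u + 1 = ℓ v := cs.isRightDescent_iff.1 hi
    -- otherwise the braid relation would shorten `v * s j * s i` to length at most `ℓ v`
    have huj : ¬cs.IsRightDescent u j := by
      intro huj
      have huj := cs.isRightDescent_iff.1 huj
      have hbraid : v * s j * s i = u * s j * s i * s j := by
        simp only [u, mul_assoc, cs.simple_mul_simple_mul_simple_of_eq_three hij]
        simp only [← mul_assoc, simple_mul_simple_cancel_right]
      have := cs.length_mul_simple_le (u * s j * s i) j
      have := cs.length_mul_simple_le (u * s j) i
      lia
    have hsum : M.simpleReflection i (Pi.single i 1 + Pi.single j 1) = Pi.single j 1 := by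
      rw [map_add, M.simpleReflection_single_self,
        M.simpleReflection_single_of_eq_three (M.symmetric i j ▸ hij)]
      abel
    rw [← cs.simple_mul_simple_cancel_right (w := v) i, geometricRepresentation_mul_simple_apply,
      hsum]
    exact ih u (by lia) j huj
  · rw [map_add]
    exact add_nonneg (ih v le_rfl i hi) (ih v le_rfl j hj)

theorem nonneg_geometricRepresentation_apply_single {w : W} {i : B}
    (h : ¬cs.IsRightDescent w i) : 0 ≤ ρ w (Pi.single i 1) := by
  induction hn : ℓ w using Nat.strong_induction_on generalizing w i with
  | _ n hind =>
  subst hn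
  have ih : ∀ v : W, ℓ v < ℓ w → ∀ k, ¬cs.IsRightDescent v k → 0 ≤ ρ v (Pi.single k 1) :=
    fun v hv k hk => hind _ hv hk rfl
  rcases eq_or_ne w 1 with rfl | hw
  · simp [Pi.single_nonneg]
  obtain ⟨j, hj⟩ := cs.exists_rightDescent_of_ne_one hw
  have hij : i ≠ j := by rintro rfl; exact h hj
  set v := w * s j
  have hv : ℓ v + 1 = ℓ w := cs.isRightDescent_iff.1 hj
  have hwi : ℓ (w * s i) = ℓ w + 1 := cs.not_isRightDescent_iff.1 h
  rw [← cs.simple_mul_simple_cancel_right (w := w) j, geometricRepresentation_mul_simple_apply]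
  rcases hM i j hij with h2 | h3
  · rw [M.simpleReflection_single_of_eq_two h2]
    refine ih v (by lia) i fun hvi => ?_
    have hvi := cs.isRightDescent_iff.1 hvi
    have hcomm : v * s i = w * s i * s j := by
      simp only [v, mul_assoc, cs.simple_mul_simple_comm_of_eq_two h2]
    have := cs.length_mul_simple_le (v * s i) j
    rw [hcomm, simple_mul_simple_cancel_right] at this
    lia
  · rw [M.simpleReflection_single_of_eq_three h3]
    refine cs.nonneg_geometricRepresentation_apply_add_of_eq_three hM h3
      (fun u hu => ih u (by lia)) ?_ ?_
    · rw [cs.not_isRightDescent_iff, simple_mul_simple_cancel_right]; lia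
    · rw [simple_mul_simple_cancel_right]; lia

lemma geometricRepresentation_apply_single_of_isRightDescent {w : W} {i : B}
    (h : cs.IsRightDescent w i) : ρ w (Pi.single i 1) ≤ 0 ∧ ρ w (Pi.single i 1) ≠ 0 := by
  have hpos := cs.nonneg_geometricRepresentation_apply_single hM
    (cs.isRightDescent_iff_not_isRightDescent_mul.1 h)
  rw [← cs.simple_mul_simple_cancel_right (w := w) i, geometricRepresentation_mul_simple_apply,
    M.simpleReflection_single_self, map_neg]
  refine ⟨neg_nonpos.2 hpos, neg_ne_zero.2 fun h0 => ?_⟩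
  have := congrArg (ρ (w * s i)⁻¹) h0
  rw [← Module.End.mul_apply, ← map_mul, inv_mul_cancel, map_one, map_zero] at this
  simpa using congrFun this i

theorem eq_one_of_forall_nonneg {w : W} (h : ∀ i, 0 ≤ ρ w (Pi.single i 1)) : w = 1 := by
  by_contra hw
  obtain ⟨i, hi⟩ := cs.exists_rightDescent_of_ne_one hw
  obtain ⟨hle, hne⟩ := cs.geometricRepresentation_apply_single_of_isRightDescent hM hi
  exact hne (le_antisymm hle (h i))

theorem geometricRepresentation_injective : Function.Injective ρ := by
  intro v w hvw
  refine inv_mul_eq_one.1 (cs.eq_one_of_forall_nonneg hM fun i => ?_)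
  rw [map_mul, ← hvw, ← map_mul, inv_mul_cancel, map_one]
  exact Pi.single_nonneg.2 zero_le_one

theorem geometricRepresentation_eq_neg_one {w c : W} (hc : ρ c = -1)
    (hw : ∀ i, cs.IsRightDescent w i) : ρ w = -1 := by
  have hwc : w * c = 1 := cs.eq_one_of_forall_nonneg hM fun i => by
    rw [map_mul, hc, mul_neg_one, LinearMap.neg_apply, neg_nonneg]
    exact (cs.geometricRepresentation_apply_single_of_isRightDescent hM (hw i)).1
  calc ρ w = ρ (w * c) * ρ c := by rw [map_mul, hc, mul_assoc]; simp
    _ = -1 := by rw [hwc, map_one, hc, one_mul]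

end CoxeterSystem

namespace CoxeterMatrix

open CoxeterSystem

theorem isSimplyLaced_E₇ : E₇.IsSimplyLaced := by
  intro i; fin_cases i <;> decide

local notation "ρ₇" => E₇.toCoxeterSystem.geometricRepresentation isSimplyLaced_E₇

-- `18` is the Coxeter number of `E₇` and `-1 ∈ W`, so a Coxeter element `c` has `c ^ (18 / 2) = -1`.
set_option maxRecDepth 100000 in
theorem geometricRepresentation_E₇_coxeterElement_pow_nine :
    ρ₇ (E₇.toCoxeterSystem.wordProd [0, 1, 2, 3, 4, 5, 6] ^ 9) = -1 := by
  rw [map_pow, geometricRepresentation_wordProd]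
  exact LinearMap.pi_ext_one (by decide)

-- Found by a breadth-first search through the conjugates of `-ρ(s₁s₄s₆)` by simple reflections.
def E₇ConjugatorWord : List (Fin 7) :=
  [5, 3, 4, 2, 3, 0, 2, 1, 3, 4, 5, 6, 3, 4, 5, 3, 4, 2, 3, 0, 2, 1, 3, 4, 3, 0, 2, 1]

set_option maxRecDepth 100000 in
theorem semiconjBy_E₇ConjugatorWord :
    SemiconjBy (E₇ConjugatorWord.map E₇.simpleReflection).prod
      (-(E₇.simpleReflection 0 * E₇.simpleReflection 3 * E₇.simpleReflection 5))
      (E₇.simpleReflection 0 * E₇.simpleReflection 1 * E₇.simpleReflection 4 *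
        E₇.simpleReflection 6) :=
  LinearMap.pi_ext_one (by decide)

end CoxeterMatrix

/-- In the Coxeter group `W` of type `E₇` (with simple reflections `s₁, …, s₇` in Bourbaki
numbering, here 0-indexed as `s 0, …, s 6`), the element `w₀ · (s₁ s₄ s₆)` is conjugate
in `W` to `s₁ s₂ s₅ s₇`, where `w₀` is an element of maximal Coxeter length. -/
theorem stmt13 (w₀ : CoxeterMatrix.E₇.Group)
    (hw₀ : ∀ w : CoxeterMatrix.E₇.Group,
      CoxeterMatrix.E₇.toCoxeterSystem.length w ≤ CoxeterMatrix.E₇.toCoxeterSystem.length w₀) :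
    IsConj (w₀ * (CoxeterMatrix.E₇.simple 0 * CoxeterMatrix.E₇.simple 3 *
        CoxeterMatrix.E₇.simple 5))
      (CoxeterMatrix.E₇.simple 0 * CoxeterMatrix.E₇.simple 1 *
        CoxeterMatrix.E₇.simple 4 * CoxeterMatrix.E₇.simple 6) := by
  have hρw₀ := E₇.toCoxeterSystem.geometricRepresentation_eq_neg_one isSimplyLaced_E₇
    geometricRepresentation_E₇_coxeterElement_pow_nine
    (E₇.toCoxeterSystem.isRightDescent_of_forall_length_le hw₀)
  refine isConj_iff.2 ⟨E₇.toCoxeterSystem.wordProd E₇ConjugatorWord, ?_⟩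
  rw [mul_inv_eq_iff_eq_mul]
  apply E₇.toCoxeterSystem.geometricRepresentation_injective isSimplyLaced_E₇
  simpa only [map_mul, hρw₀, neg_one_mul, CoxeterSystem.geometricRepresentation_wordProd,
    ← toCoxeterSystem_simple, CoxeterSystem.geometricRepresentation_simple] using
    semiconjBy_E₇ConjugatorWord.eq
end

section
/- In the Coxeter group W of type F₄, let u be an element of the parabolic subgroup P generated by s₂, s₃, s₄ whose length ℓ(u) is maximal among the lengths of elements of P. Then w₀ · s₁ is conjugate in W to u. -/
/-!
Write `W(F₄)` in `GL₄(ℤ)` through its reflection representation in the basis of simple roots.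
Tits' lemma, which reduces to a finite check in the rank-two parabolic subgroups, shows that
`w` sends `α i` to a nonnegative vector unless `i` is a right descent of `w`; hence the length
of `w` is the number of positive roots it makes negative, and the representation is faithful.
An element acting by `-1` on a set `S` of positive roots is then the unique longest element among
those whose inversions lie in `S`: this identifies `w₀` with `(s 0 * s 1 * s 2 * s 3)⁶`, which
acts by `-1`, and `u` with `(s 1 * s 2 * s 3)³`, which acts by `-1` on the positive roots of the
parabolic subgroup (those with vanishing `0`-th coordinate). The conjugacy of the two explicit
words is one matrix identity, transported back by faithfulness.
-/

open List Matrix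
open scoped Finset

theorem MonoidHom.mulVec_apply_eq_of_mem_closure {G n R : Type*} [Group G] [Fintype n]
    [DecidableEq n] [CommRing R] (ρ : G →* Matrix n n R) {T : Set G} {l : n}
    (hT : ∀ t ∈ T, ∀ v, (ρ t *ᵥ v) l = v l) {x : G} (hx : x ∈ Subgroup.closure T)
    (v : n → R) : (ρ x *ᵥ v) l = v l := by
  induction hx using Subgroup.closure_induction generalizing v with
  | mem t ht => exact hT t ht v
  | one => rw [map_one, one_mulVec]
  | mul x y _ _ hx hy => rw [map_mul, ← mulVec_mulVec, hx, hy]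
  | inv x _ hx =>
    rw [← hx (ρ x⁻¹ *ᵥ v), mulVec_mulVec, ← map_mul, mul_inv_cancel, map_one, one_mulVec]

namespace CoxeterSystem

variable {B W : Type*} [Group W] {M : CoxeterMatrix B} (cs : CoxeterSystem M W)

theorem isRightDescent_of_length_eq_add {v w : W} {a b : B} {k : ℕ} (hk : k ≠ 0)
    (hw : w = v * cs.wordProd (alternatingWord a b k)) (hl : cs.length w = cs.length v + k) :
    cs.IsRightDescent w b := by
  obtain ⟨k, rfl⟩ := Nat.exists_eq_succ_of_ne_zero hk
  have hwb : w * cs.simple b = v * cs.wordProd (alternatingWord b a k) := by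
    rw [hw, alternatingWord_succ, wordProd_concat, mul_assoc, simple_mul_simple_cancel_right]
  have := cs.length_wordProd_le (alternatingWord b a k)
  have := cs.length_mul_le v (cs.wordProd (alternatingWord b a k))
  rw [length_alternatingWord] at *
  rw [IsRightDescent, hwb]
  omega

theorem exists_dihedral_factorization (i j : B) (w : W) :
    ∃ v a b k, (a = i ∧ b = j ∨ a = j ∧ b = i) ∧
      ¬cs.IsRightDescent v i ∧ ¬cs.IsRightDescent v j ∧
      w = v * cs.wordProd (alternatingWord a b k) ∧ cs.length w = cs.length v + k := by
  induction h : cs.length w using Nat.strong_induction_on generalizing w with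
  | _ n ih =>
  by_cases hdesc : ∃ x, (x = i ∨ x = j) ∧ cs.IsRightDescent w x
  · obtain ⟨x, hx, hwx⟩ := hdesc
    have hlen := cs.isRightDescent_iff.mp hwx
    obtain ⟨v, a, b, k, hab, hvi, hvj, hw', hl⟩ := ih _ (by omega) (w * cs.simple x) rfl
    have hw : w = v * cs.wordProd (alternatingWord a b k) * cs.simple x := by
      rw [← hw', simple_mul_simple_cancel_right]
    have hxab : x = a ∨ x = b := by rcases hab with ⟨rfl, rfl⟩ | ⟨rfl, rfl⟩ <;> tauto
    rcases hxab with rfl | rfl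
    · refine ⟨v, b, x, k + 1, by tauto, hvi, hvj, ?_, by omega⟩
      rw [hw, alternatingWord_succ, wordProd_concat, mul_assoc]
    · rcases Nat.eq_zero_or_pos k with rfl | hk
      · refine ⟨v, a, x, 1, hab, hvi, hvj, ?_, by omega⟩
        rw [hw]
        simp [alternatingWord]
      · have := cs.isRightDescent_of_length_eq_add hk.ne' hw' hl
        rw [cs.isRightDescent_iff, simple_mul_simple_cancel_right] at this
        omega
  · push Not at hdesc
    exact ⟨w, i, j, 0, Or.inl ⟨rfl, rfl⟩, hdesc i (Or.inl rfl), hdesc j (Or.inr rfl),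
      by simp [alternatingWord], by simp [← h]⟩

theorem lt_or_eq_zero_of_not_isRightDescent {v w : W} {i j : B} {k : ℕ}
    (hw : ¬cs.IsRightDescent w i) (hvw : w = v * cs.wordProd (alternatingWord i j k))
    (hl : cs.length w = cs.length v + k) : k < M i j ∨ M i j = 0 := by
  by_contra! h
  obtain ⟨hMk, hM⟩ := h
  rcases hMk.eq_or_lt with hk | hk
  · subst hk
    refine hw (cs.isRightDescent_of_length_eq_add (a := j) hM (hvw.trans ?_) hl)
    have := cs.wordProd_braidWord_eq i j
    rw [braidWord, braidWord, M.symmetric j i] at this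
    rw [this]
  · have hred := cs.not_isReduced_alternatingWord i j hM hk
    have := cs.length_wordProd_le (alternatingWord i j k)
    have := cs.length_mul_le v (cs.wordProd (alternatingWord i j k))
    rw [IsReduced, length_alternatingWord] at *
    rw [← hvw] at this
    omega

section RootInversions

variable {R : Type*} [Ring R] [DecidableEq R] [Fintype B]

def rootInversions (Φ : Finset (B → R)) (g : Matrix B B R) : Finset (B → R) :=
  {β ∈ Φ | -(g *ᵥ β) ∈ Φ}

theorem mem_rootInversions {Φ : Finset (B → R)} {g : Matrix B B R} {β : B → R} :
    β ∈ rootInversions Φ g ↔ β ∈ Φ ∧ -(g *ᵥ β) ∈ Φ :=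
  Finset.mem_filter

end RootInversions

variable {R : Type*} [CommRing R] [PartialOrder R] [IsOrderedRing R] [Fintype B] [DecidableEq B]

/-- With `ρ` written in the basis of simple roots: in each rank-two parabolic subgroup, the
reduced words ending in `j` send `α i` into the cone spanned by `α i` and `α j`. This is the
rank-two case of Tits' lemma, a finite check when `M` has no entry `0`. -/
def IsDihedrallyPositive (ρ : W →* Matrix B B R) : Prop :=
  ∀ i j, i ≠ j → ∀ k, k < M i j ∨ M i j = 0 → ∃ p q : R, 0 ≤ p ∧ 0 ≤ q ∧
    ρ (cs.wordProd (alternatingWord i j k)) *ᵥ Pi.single i 1 =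
      p • Pi.single i 1 + q • Pi.single j 1

variable {cs} {ρ : W →* Matrix B B R}

theorem nonneg_mulVec_single_of_not_isRightDescent (hρ : cs.IsDihedrallyPositive ρ) {w : W}
    {i : B} (hw : ¬cs.IsRightDescent w i) : 0 ≤ ρ w *ᵥ Pi.single i 1 := by
  induction h : cs.length w using Nat.strong_induction_on generalizing w i with
  | _ n ih =>
  rcases eq_or_ne w 1 with rfl | hw1
  · rw [map_one, one_mulVec]
    exact Pi.single_nonneg.2 zero_le_one
  obtain ⟨j, hj⟩ := cs.exists_rightDescent_of_ne_one hw1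
  have hij : i ≠ j := by rintro rfl; exact hw hj
  obtain ⟨v, a, b, k, hab, hvi, hvj, hvw, hl⟩ := cs.exists_dihedral_factorization i j w
  have hk : k ≠ 0 := by
    rintro rfl
    simp only [alternatingWord, wordProd_nil, mul_one] at hvw
    exact hvj (hvw ▸ hj)
  obtain ⟨rfl, rfl⟩ : a = i ∧ b = j := by
    refine hab.resolve_right fun ⟨ha, hb⟩ => hw ?_
    subst ha hb
    exact cs.isRightDescent_of_length_eq_add hk hvw hl
  obtain ⟨p, q, hp, hq, hpq⟩ := hρ a b hij k (cs.lt_or_eq_zero_of_not_isRightDescent hw hvw hl)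
  have hv : cs.length v < n := by omega
  rw [hvw, map_mul, ← mulVec_mulVec, hpq, mulVec_add, mulVec_smul, mulVec_smul]
  exact add_nonneg (smul_nonneg hp (ih _ hv hvi rfl)) (smul_nonneg hq (ih _ hv hvj rfl))

variable (cs ρ) in
structure IsPositiveRootSet (Φ : Finset (B → R)) : Prop where
  single_mem : ∀ i, Pi.single i 1 ∈ Φ
  nonneg : ∀ β ∈ Φ, 0 ≤ β
  ne_zero : ∀ β ∈ Φ, β ≠ 0
  simple_mulVec_single : ∀ i, ρ (cs.simple i) *ᵥ Pi.single i 1 = -Pi.single i 1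
  simple_mulVec_mem : ∀ i, ∀ β ∈ Φ, β ≠ Pi.single i 1 → ρ (cs.simple i) *ᵥ β ∈ Φ

variable {Φ : Finset (B → R)}

namespace IsPositiveRootSet

variable (hΦ : IsPositiveRootSet cs ρ Φ)
include hΦ

theorem neg_notMem {β : B → R} (hβ : β ∈ Φ) : -β ∉ Φ := fun hneg =>
  hΦ.ne_zero β hβ (le_antisymm (neg_nonneg.mp (hΦ.nonneg _ hneg)) (hΦ.nonneg β hβ))

omit [IsOrderedRing R] in
theorem mulVec_mem_or_neg_mem (w : W) {β : B → R} (hβ : β ∈ Φ ∨ -β ∈ Φ) :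
    ρ w *ᵥ β ∈ Φ ∨ -(ρ w *ᵥ β) ∈ Φ := by
  induction w using cs.simple_induction_left with
  | one => simpa using hβ
  | mul_simple_left w i ih =>
    have key : ∀ γ ∈ Φ, ρ (cs.simple i) *ᵥ γ ∈ Φ ∨ -(ρ (cs.simple i) *ᵥ γ) ∈ Φ := fun γ hγ => by
      by_cases hγi : γ = Pi.single i 1
      · right
        rw [hγi, hΦ.simple_mulVec_single, neg_neg]
        exact hΦ.single_mem i
      · exact Or.inl (hΦ.simple_mulVec_mem i γ hγ hγi)
    rw [map_mul, ← mulVec_mulVec]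
    rcases ih with h | h
    · exact key _ h
    · simpa [mulVec_neg, or_comm] using key _ h

theorem mem_of_nonneg {x : B → R} (hx : x ∈ Φ ∨ -x ∈ Φ) (hx0 : 0 ≤ x) : x ∈ Φ :=
  hx.resolve_right fun hneg => hΦ.ne_zero _ hneg
    (neg_eq_zero.mpr (le_antisymm (neg_nonneg.mp (hΦ.nonneg _ hneg)) hx0))

theorem neg_mulVec_single_mem_of_isRightDescent (hρ : cs.IsDihedrallyPositive ρ) {w : W} {i : B}
    (hw : cs.IsRightDescent w i) : -(ρ w *ᵥ Pi.single i 1) ∈ Φ := by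
  have hws : ρ w *ᵥ Pi.single i 1 = -(ρ (w * cs.simple i) *ᵥ Pi.single i 1) := by
    rw [map_mul, ← mulVec_mulVec, hΦ.simple_mulVec_single, mulVec_neg, neg_neg]
  rw [hws, neg_neg]
  exact hΦ.mem_of_nonneg (hΦ.mulVec_mem_or_neg_mem _ (Or.inl (hΦ.single_mem i)))
    (nonneg_mulVec_single_of_not_isRightDescent hρ
      (cs.isRightDescent_iff_not_isRightDescent_mul.mp hw))

variable [DecidableEq R]

theorem rootInversions_one : rootInversions Φ 1 = ∅ := by
  ext β
  simp only [mem_rootInversions, one_mulVec, Finset.notMem_empty, iff_false, not_and]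
  exact hΦ.neg_notMem

theorem card_rootInversions_mul_simple_add_one (g : Matrix B B R) {i : B}
    (hg : -(g *ᵥ Pi.single i 1) ∈ Φ) :
    #(rootInversions Φ (g * ρ (cs.simple i))) + 1 = #(rootInversions Φ g) := by
  set s := ρ (cs.simple i)
  have hss (v : B → R) : s *ᵥ (s *ᵥ v) = v := by
    rw [mulVec_mulVec, ← map_mul, simple_mul_simple_self, map_one, one_mulVec]
  have hsg (v : B → R) : (g * s) *ᵥ (s *ᵥ v) = g *ᵥ v := by rw [← mulVec_mulVec, hss]
  have hmem : Pi.single i 1 ∈ rootInversions Φ g := mem_rootInversions.mpr ⟨hΦ.single_mem i, hg⟩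
  -- `s` permutes the positive roots other than `α i`, and so matches the inversions of `g * s`
  -- with those of `g` other than `α i`.
  rw [← Finset.card_erase_add_one hmem, Finset.card_nbij' (s *ᵥ ·) (s *ᵥ ·)]
  · rintro γ hγ
    obtain ⟨hγΦ, hgγ⟩ := by simpa only [Finset.mem_coe, mem_rootInversions] using hγ
    rw [← mulVec_mulVec] at hgγ
    have hγe : γ ≠ Pi.single i 1 := by
      rintro rfl
      rw [hΦ.simple_mulVec_single, mulVec_neg, neg_neg] at hgγ
      exact hΦ.neg_notMem hgγ hg
    have hsγe : s *ᵥ γ ≠ Pi.single i 1 := fun h => by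
      rw [← hss γ, h, hΦ.simple_mulVec_single] at hγΦ
      exact hΦ.neg_notMem (hΦ.single_mem i) hγΦ
    simp only [Finset.mem_coe, Finset.mem_erase, mem_rootInversions]
    exact ⟨hsγe, hΦ.simple_mulVec_mem i γ hγΦ hγe, hgγ⟩
  · rintro β hβ
    obtain ⟨hne, hβΦ, hgβ⟩ := by
      simpa only [Finset.mem_coe, Finset.mem_erase, mem_rootInversions] using hβ
    exact mem_rootInversions.mpr ⟨hΦ.simple_mulVec_mem i β hβΦ hne, by rwa [hsg]⟩
  · exact fun β _ => hss β
  · exact fun β _ => hss β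

theorem length_eq_card_rootInversions (hρ : cs.IsDihedrallyPositive ρ) (w : W) :
    cs.length w = #(rootInversions Φ (ρ w)) := by
  induction h : cs.length w using Nat.strong_induction_on generalizing w with
  | _ n ih =>
  rcases eq_or_ne w 1 with rfl | hw1
  · rw [← h, map_one, hΦ.rootInversions_one, length_one, Finset.card_empty]
  obtain ⟨i, hi⟩ := cs.exists_rightDescent_of_ne_one hw1
  have hl := cs.isRightDescent_iff.mp hi
  rw [← hΦ.card_rootInversions_mul_simple_add_one _
    (hΦ.neg_mulVec_single_mem_of_isRightDescent hρ hi), ← map_mul, ← ih _ (by omega) _ rfl]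
  omega

theorem injective (hρ : cs.IsDihedrallyPositive ρ) : Function.Injective ρ := by
  refine (injective_iff_map_eq_one ρ).mpr fun w hw => cs.length_eq_zero_iff.mp ?_
  rw [hΦ.length_eq_card_rootInversions hρ, hw, hΦ.rootInversions_one, Finset.card_empty]

theorem eq_of_length_le (hρ : cs.IsDihedrallyPositive ρ) {H : Subgroup W}
    {S : Finset (B → R)} (hH : ∀ x ∈ H, rootInversions Φ (ρ x) ⊆ S) (hSΦ : S ⊆ Φ) {c x : W}
    (hc : c ∈ H) (hcS : ∀ β ∈ S, ρ c *ᵥ β = -β) (hx : x ∈ H)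
    (hcx : cs.length c ≤ cs.length x) : x = c := by
  have hcinv : rootInversions Φ (ρ c) = S := by
    refine (hH c hc).antisymm fun β hβ => mem_rootInversions.mpr ⟨hSΦ hβ, ?_⟩
    rw [hcS β hβ, neg_neg]
    exact hSΦ hβ
  have hxinv : rootInversions Φ (ρ x) = S := by
    refine Finset.eq_of_subset_of_card_le (hH x hx) ?_
    rw [← hcinv, ← hΦ.length_eq_card_rootInversions hρ, ← hΦ.length_eq_card_rootInversions hρ]
    exact hcx
  -- `x` inverts all of `S`, as `c` does, so `x * c⁻¹` inverts nothing.
  rw [← mul_inv_eq_one, ← cs.length_eq_zero_iff, hΦ.length_eq_card_rootInversions hρ,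
    Finset.card_eq_zero, Finset.eq_empty_iff_forall_notMem]
  intro β hβ
  have hβS := hH _ (mul_mem hx (inv_mem hc)) hβ
  have hcβ : ρ c⁻¹ *ᵥ β = -β := by
    conv_lhs => rw [← neg_neg β, ← hcS β hβS, mulVec_neg, mulVec_mulVec, ← map_mul,
      inv_mul_cancel, map_one, one_mulVec]
  have hxβ := (mem_rootInversions.mp hβ).2
  rw [map_mul, ← mulVec_mulVec, hcβ, mulVec_neg, neg_neg] at hxβ
  exact hΦ.neg_notMem hxβ (mem_rootInversions.mp (hxinv ▸ hβS)).2

theorem apply_eq_zero_of_mem_rootInversions {g : Matrix B B R} {l : B}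
    (hg : ∀ v, (g *ᵥ v) l = v l) {β : B → R} (hβ : β ∈ rootInversions Φ g) : β l = 0 := by
  obtain ⟨hβΦ, hgβ⟩ := mem_rootInversions.mp hβ
  have := hΦ.nonneg _ hgβ l
  rw [Pi.zero_apply, Pi.neg_apply, hg, neg_nonneg] at this
  exact this.antisymm (hΦ.nonneg β hβΦ l)

end IsPositiveRootSet

end CoxeterSystem

namespace CoxeterMatrix.F₄

open CoxeterSystem

/-- The reflection representation in the basis of simple roots (`α 0`, `α 1` long): the matrix of
`s i` differs from the identity only in row `i`, and sends `α i` to `-α i`. -/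
def simpleReflection : Fin 4 → Matrix (Fin 4) (Fin 4) ℤ :=
  ![!![-1, 1, 0, 0; 0, 1, 0, 0; 0, 0, 1, 0; 0, 0, 0, 1],
    !![1, 0, 0, 0; 1, -1, 1, 0; 0, 0, 1, 0; 0, 0, 0, 1],
    !![1, 0, 0, 0; 0, 1, 0, 0; 0, 2, -1, 1; 0, 0, 0, 1],
    !![1, 0, 0, 0; 0, 1, 0, 0; 0, 0, 1, 0; 0, 0, 1, -1]]

theorem isLiftable_simpleReflection : F₄.IsLiftable simpleReflection := by
  unfold IsLiftable
  decide

def reflectionRep : F₄.Group →* Matrix (Fin 4) (Fin 4) ℤ :=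
  F₄.toCoxeterSystem.lift ⟨simpleReflection, isLiftable_simpleReflection⟩

@[simp]
theorem reflectionRep_simple (i : Fin 4) : reflectionRep (F₄.simple i) = simpleReflection i := by
  rw [← toCoxeterSystem_simple]
  exact F₄.toCoxeterSystem.lift_apply_simple isLiftable_simpleReflection i

theorem reflectionRep_wordProd (ω : List (Fin 4)) :
    reflectionRep (F₄.toCoxeterSystem.wordProd ω) = (ω.map simpleReflection).prod := by
  simp [wordProd, map_list_prod, Function.comp_def]

def positiveRoots : Finset (Fin 4 → ℤ) :=
  {![0, 0, 0, 1], ![0, 0, 1, 0], ![0, 0, 1, 1], ![0, 1, 0, 0], ![0, 1, 1, 0], ![0, 1, 1, 1],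
   ![0, 1, 2, 0], ![0, 1, 2, 1], ![0, 1, 2, 2], ![1, 0, 0, 0], ![1, 1, 0, 0], ![1, 1, 1, 0],
   ![1, 1, 1, 1], ![1, 1, 2, 0], ![1, 1, 2, 1], ![1, 1, 2, 2], ![1, 2, 2, 0], ![1, 2, 2, 1],
   ![1, 2, 2, 2], ![1, 2, 3, 1], ![1, 2, 3, 2], ![1, 2, 4, 2], ![1, 3, 4, 2], ![2, 3, 4, 2]}

theorem isPositiveRootSet : F₄.toCoxeterSystem.IsPositiveRootSet reflectionRep positiveRoots where
  single_mem := by decide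
  nonneg β hβ k := by revert β k; decide
  ne_zero := by decide
  simple_mulVec_single i := by
    simp only [toCoxeterSystem_simple, reflectionRep_simple]
    revert i
    decide
  simple_mulVec_mem i := by
    simp only [toCoxeterSystem_simple, reflectionRep_simple]
    revert i
    decide

theorem isDihedrallyPositive : F₄.toCoxeterSystem.IsDihedrallyPositive reflectionRep := by
  have hdih : ∀ i j k : Fin 4, i ≠ j → (k : ℕ) < F₄ i j →
      (fun v : Fin 4 → ℤ => 0 ≤ v i ∧ 0 ≤ v j ∧ v = v i • Pi.single i 1 + v j • Pi.single j 1)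
        (((alternatingWord i j k).map simpleReflection).prod *ᵥ Pi.single i 1) := by
    decide
  intro i j hij k hk
  have hM : F₄ i j ≠ 0 ∧ F₄ i j ≤ 4 := by fin_cases i <;> fin_cases j <;> decide
  have hk : k < F₄ i j := hk.resolve_right hM.1
  obtain ⟨hp, hq, hv⟩ := hdih i j ⟨k, by omega⟩ hij hk
  exact ⟨_, _, hp, hq, by rwa [reflectionRep_wordProd]⟩

/-- `c ^ (h / 2)` for the Coxeter element `c = s 0 * s 1 * s 2 * s 3` and the Coxeter number
`h = 12`. -/
def longestWord : List (Fin 4) := (List.replicate 6 [0, 1, 2, 3]).flatten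

def parabolicB₃ : Subgroup F₄.Group :=
  Subgroup.closure {F₄.simple 1, F₄.simple 2, F₄.simple 3}

/-- `c ^ (h / 2)` for the Coxeter element `c = s 1 * s 2 * s 3` of `B₃` and `h = 6`. -/
def parabolicLongestWord : List (Fin 4) := (List.replicate 3 [1, 2, 3]).flatten

def conjugatorWord : List (Fin 4) := [0, 1, 2, 1, 3, 2, 1]

set_option maxRecDepth 10000 in
theorem eq_wordProd_longestWord {w₀ : F₄.Group}
    (hw₀ : ∀ w, F₄.toCoxeterSystem.length w ≤ F₄.toCoxeterSystem.length w₀) :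
    w₀ = F₄.toCoxeterSystem.wordProd longestWord := by
  have h : (longestWord.map simpleReflection).prod = -1 := by decide
  refine isPositiveRootSet.eq_of_length_le isDihedrallyPositive (H := ⊤)
    (fun _ _ => Finset.filter_subset _ _) subset_rfl (Subgroup.mem_top _) (fun β _ => ?_)
    (Subgroup.mem_top _) (hw₀ _)
  rw [reflectionRep_wordProd, h, neg_mulVec, one_mulVec]

theorem simple_mem_parabolicB₃ {i : Fin 4} (hi : i ≠ 0) : F₄.simple i ∈ parabolicB₃ := by
  apply Subgroup.subset_closure
  fin_cases i <;> simp_all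

theorem wordProd_parabolicLongestWord_mem :
    F₄.toCoxeterSystem.wordProd parabolicLongestWord ∈ parabolicB₃ := by
  have h : ∀ i ∈ parabolicLongestWord, i ≠ 0 := by decide
  refine parabolicB₃.list_prod_mem fun x hx => ?_
  obtain ⟨i, hi, rfl⟩ := List.mem_map.mp hx
  rw [toCoxeterSystem_simple]
  exact simple_mem_parabolicB₃ (h i hi)

theorem rootInversions_subset_of_mem_parabolicB₃ {x : F₄.Group} (hx : x ∈ parabolicB₃) :
    rootInversions positiveRoots (reflectionRep x) ⊆ {β ∈ positiveRoots | β 0 = 0} := by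
  have hrow : ∀ i : Fin 4, i ≠ 0 → simpleReflection i 0 = Pi.single 0 1 := by decide
  have hfix : ∀ v, (reflectionRep x *ᵥ v) 0 = v 0 := by
    refine reflectionRep.mulVec_apply_eq_of_mem_closure ?_ hx
    rintro t ht v
    obtain ⟨i, hi, rfl⟩ : ∃ i : Fin 4, i ≠ 0 ∧ F₄.simple i = t := by
      rcases ht with rfl | rfl | rfl
      exacts [⟨1, by decide, rfl⟩, ⟨2, by decide, rfl⟩, ⟨3, by decide, rfl⟩]
    rw [reflectionRep_simple, mulVec, hrow i hi, single_dotProduct, one_mul]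
  intro β hβ
  exact Finset.mem_filter.mpr ⟨(mem_rootInversions.mp hβ).1,
    isPositiveRootSet.apply_eq_zero_of_mem_rootInversions hfix hβ⟩

theorem eq_wordProd_parabolicLongestWord {u : F₄.Group} (hu : u ∈ parabolicB₃)
    (humax : ∀ v ∈ parabolicB₃, F₄.toCoxeterSystem.length v ≤ F₄.toCoxeterSystem.length u) :
    u = F₄.toCoxeterSystem.wordProd parabolicLongestWord := by
  have h : ∀ β ∈ positiveRoots, β 0 = 0 →
      (parabolicLongestWord.map simpleReflection).prod *ᵥ β = -β := by
    decide
  refine isPositiveRootSet.eq_of_length_le isDihedrallyPositive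
    (fun _ => rootInversions_subset_of_mem_parabolicB₃) (Finset.filter_subset _ _)
    wordProd_parabolicLongestWord_mem (fun β hβ => ?_) hu
    (humax _ wordProd_parabolicLongestWord_mem)
  rw [reflectionRep_wordProd]
  exact h β (Finset.mem_filter.mp hβ).1 (Finset.mem_filter.mp hβ).2

set_option maxRecDepth 10000 in
theorem isConj_wordProd_longestWord_mul_simple_zero :
    IsConj (F₄.toCoxeterSystem.wordProd longestWord * F₄.simple 0)
      (F₄.toCoxeterSystem.wordProd parabolicLongestWord) := by
  have h : (conjugatorWord.map simpleReflection).prod *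
      ((longestWord.map simpleReflection).prod * simpleReflection 0) =
      (parabolicLongestWord.map simpleReflection).prod *
        (conjugatorWord.map simpleReflection).prod := by
    decide
  refine isConj_iff.mpr ⟨F₄.toCoxeterSystem.wordProd conjugatorWord, ?_⟩
  rw [mul_inv_eq_iff_eq_mul]
  apply isPositiveRootSet.injective isDihedrallyPositive
  simpa only [map_mul, reflectionRep_wordProd, reflectionRep_simple] using h

end CoxeterMatrix.F₄

open CoxeterMatrix.F₄ in
/-- In the Coxeter group `W` of type `F₄` (with simple reflections `s₁, s₂, s₃, s₄`, here
0-indexed as `s 0, …, s 3`; the bonds `1–2` and `3–4` have label 3 and the bond `2–3`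
has label 4), let `u` be an element of the parabolic subgroup `P` generated by
`s₂, s₃, s₄` whose length is maximal among the lengths of elements of `P`.  Then
`w₀ · s₁` is conjugate in `W` to `u`, where `w₀` is an element of maximal Coxeter
length in `W`. -/
theorem stmt17 (w₀ : CoxeterMatrix.F₄.Group)
    (hw₀ : ∀ w : CoxeterMatrix.F₄.Group,
      CoxeterMatrix.F₄.toCoxeterSystem.length w ≤ CoxeterMatrix.F₄.toCoxeterSystem.length w₀)
    (u : CoxeterMatrix.F₄.Group)
    (hu : u ∈ Subgroup.closure {CoxeterMatrix.F₄.simple 1, CoxeterMatrix.F₄.simple 2,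
      CoxeterMatrix.F₄.simple 3})
    (humax : ∀ v ∈ Subgroup.closure {CoxeterMatrix.F₄.simple 1, CoxeterMatrix.F₄.simple 2,
        CoxeterMatrix.F₄.simple 3},
      CoxeterMatrix.F₄.toCoxeterSystem.length v ≤ CoxeterMatrix.F₄.toCoxeterSystem.length u) :
    IsConj (w₀ * CoxeterMatrix.F₄.simple 0) u := by
  rw [eq_wordProd_longestWord hw₀, eq_wordProd_parabolicLongestWord hu humax]
  exact isConj_wordProd_longestWord_mul_simple_zero
end
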